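/- arXiv:2207.14438 — 2 statements merged into one kernel-verified Lean document; each statement's English description precedes it below -/
import Mathlib

section
/- Let (X, 𝒜, μ) be a probability space, Y a nonempty finite set, and p : X × Y → [0,1] a function such that x ↦ p(x,y) is measurable for each y ∈ Y and Σ_{y∈Y} p(x,y) = 1 for every x ∈ X. Let q be a probability mass function on Y with q(y) > 0 for all y, and define p̄(y) := ∫_X p(x,y) dμ(x). If p̄(y) > 0 for all y ∈ Y, then ∫_X D_KL(p(x,·)‖p̄) dμ(x) ≤ (1/ln 2)·∫_X D_{χ²}(p(x,·)‖q) dμ(x). -/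
open MeasureTheory

noncomputable section

/-- The Kullback–Leibler divergence (base 2) between PMFs on a finite set,
with the convention that terms with `p z = 0` vanish. -/
noncomputable def klDiv {Z : Type*} [Fintype Z] (p q : Z → ℝ) : ℝ :=
  ∑ z, if 0 < p z then p z * Real.logb 2 (p z / q z) else 0

/-- The χ²-divergence between PMFs on a finite set. -/
noncomputable def chiSqDiv {Z : Type*} [Fintype Z] (p q : Z → ℝ) : ℝ :=
  ∑ z, q z * (p z / q z - 1) ^ 2

/-- The Shannon entropy (base 2) of a PMF on a finite set. -/
noncomputable def entropy {Z : Type*} [Fintype Z] (p : Z → ℝ) : ℝ :=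
  -∑ z, p z * Real.logb 2 (p z)

lemma aux_abs_mul_log_le_one {t : ℝ} (h0 : 0 < t) (h1 : t ≤ 1) : |t * Real.log t| ≤ 1 := by
  have hlog : Real.log t ≤ 0 := Real.log_nonpos h0.le h1
  have hinv : Real.log t⁻¹ ≤ t⁻¹ - 1 := Real.log_le_sub_one_of_pos (by positivity)
  rw [Real.log_inv] at hinv
  have habs : |t * Real.log t| = t * (-Real.log t) := by
    rw [abs_of_nonpos (by nlinarith)]; ring
  rw [habs]
  have h2 : t * (-Real.log t) ≤ t * (t⁻¹ - 1) := by nlinarith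
  have h3 : t * (t⁻¹ - 1) = 1 - t := by field_simp
  nlinarith

lemma aux_g_bound {c t : ℝ} (hc : 0 < c) (h0 : 0 ≤ t) (h1 : t ≤ 1) :
    |(if 0 < t then t * Real.logb 2 (t / c) else 0)| ≤ (1 + |Real.log c|) / Real.log 2 := by
  have h2 : (0:ℝ) < Real.log 2 := Real.log_pos one_lt_two
  split
  case isTrue h =>
    rw [Real.logb, Real.log_div (ne_of_gt h) (ne_of_gt hc)]
    have : t * ((Real.log t - Real.log c) / Real.log 2)
        = (t * Real.log t - t * Real.log c) / Real.log 2 := by ring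
    rw [this, abs_div, abs_of_pos h2]
    apply div_le_div_of_nonneg_right ?_ h2.le |>.trans_eq rfl
    calc |t * Real.log t - t * Real.log c| ≤ |t * Real.log t| + |t * Real.log c| := abs_sub _ _
      _ ≤ 1 + |Real.log c| := by
          have := aux_abs_mul_log_le_one (t := t) h h1
          have : |t * Real.log c| = t * |Real.log c| := by
            rw [abs_mul, abs_of_nonneg h0]
          nlinarith [aux_abs_mul_log_le_one (t := t) h h1, abs_nonneg (Real.log c),
            abs_mul t (Real.log c), abs_of_nonneg h0]
  case isFalse h =>
    simp only [abs_zero]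
    positivity

lemma aux_g_measurable (c : ℝ) :
    Measurable (fun t : ℝ => if 0 < t then t * Real.logb 2 (t / c) else 0) := by
  apply Measurable.ite (measurableSet_lt measurable_const measurable_id)
    ?_ measurable_const
  simp only [Real.logb]
  exact measurable_id.mul ((Real.measurable_log.comp (measurable_id.div_const c)).div_const _)

lemma aux_integrable_of_bounded {X : Type*} [MeasurableSpace X] (μ : Measure X)
    [IsProbabilityMeasure μ] {f : X → ℝ} (hf : Measurable f) (C : ℝ) (h : ∀ x, |f x| ≤ C) :
    Integrable f μ :=
  Integrable.mono' (integrable_const C) hf.aestronglyMeasurable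
    (Filter.Eventually.of_forall fun x => by simpa using h x)

lemma aux_gibbs {Y : Type*} [Fintype Y] {a b : Y → ℝ} (ha : ∀ y, 0 < a y) (hb : ∀ y, 0 < b y)
    (hsa : ∑ y, a y = 1) (hsb : ∑ y, b y = 1) :
    0 ≤ ∑ y, a y * Real.logb 2 (a y / b y) := by
  have h2 : (0:ℝ) < Real.log 2 := Real.log_pos one_lt_two
  have key : ∑ y, a y * Real.log (b y / a y) ≤ 0 := by
    calc ∑ y, a y * Real.log (b y / a y) ≤ ∑ y, a y * (b y / a y - 1) :=
          Finset.sum_le_sum fun y _ => by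
            have hay := ha y
            have hby := hb y
            exact mul_le_mul_of_nonneg_left
              (Real.log_le_sub_one_of_pos (by positivity)) (ha y).le
      _ = ∑ y, (b y - a y) := Finset.sum_congr rfl fun y _ => by
          have hay := (ha y).ne'
          field_simp
      _ = 0 := by rw [Finset.sum_sub_distrib, hsa, hsb]; ring
  have heq : ∑ y, a y * Real.logb 2 (a y / b y)
      = (-(∑ y, a y * Real.log (b y / a y))) / Real.log 2 := by
    rw [← Finset.sum_neg_distrib, Finset.sum_div]
    apply Finset.sum_congr rfl
    intro y _
    rw [Real.logb, Real.log_div (ne_of_gt (ha y)) (ne_of_gt (hb y)),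
      Real.log_div (ne_of_gt (hb y)) (ne_of_gt (ha y))]
    ring
  rw [heq]
  apply div_nonneg (by linarith) h2.le

lemma aux_kl_le_chisq {Y : Type*} [Fintype Y] {p q : Y → ℝ} (hp0 : ∀ y, 0 ≤ p y)
    (hps : ∑ y, p y = 1) (hq : ∀ y, 0 < q y) (hqs : ∑ y, q y = 1) :
    klDiv p q ≤ (1 / Real.log 2) * chiSqDiv p q := by
  have h2 : (0:ℝ) < Real.log 2 := Real.log_pos one_lt_two
  have step1 : klDiv p q ≤ (1 / Real.log 2) * ∑ y, (p y ^ 2 / q y - p y) := by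
    rw [klDiv, Finset.mul_sum]
    apply Finset.sum_le_sum
    intro y _
    split
    case isTrue h =>
      rw [Real.logb]
      have hqy := hq y
      have hlog : Real.log (p y / q y) ≤ p y / q y - 1 :=
        Real.log_le_sub_one_of_pos (by positivity)
      have : p y * (Real.log (p y / q y) / Real.log 2) ≤ p y * ((p y / q y - 1) / Real.log 2) := by
        apply mul_le_mul_of_nonneg_left _ h.le
        exact div_le_div_of_nonneg_right hlog h2.le
      refine this.trans_eq ?_
      have hqy := (hq y).ne'
      field_simp
    case isFalse h =>
      have hpy : p y = 0 := le_antisymm (not_lt.mp h) (hp0 y)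
      rw [hpy]
      simp
  refine step1.trans ?_
  apply mul_le_mul_of_nonneg_left _ (by positivity)
  apply le_of_eq
  rw [chiSqDiv]
  have : ∑ y, q y * (p y / q y - 1) ^ 2 = ∑ y, (p y ^ 2 / q y - 2 * p y + q y) := by
    apply Finset.sum_congr rfl
    intro y _
    have hqy := (hq y).ne'
    field_simp
    ring
  rw [this]
  have e1 : ∑ y, (p y ^ 2 / q y - p y) = (∑ y, p y ^ 2 / q y) - 1 := by
    rw [Finset.sum_sub_distrib, hps]
  have e2 : ∑ y, (p y ^ 2 / q y - 2 * p y + q y) = (∑ y, p y ^ 2 / q y) - 2 + 1 := by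
    rw [Finset.sum_add_distrib, Finset.sum_sub_distrib, ← Finset.mul_sum, hps, hqs]
    ring
  rw [e1, e2]
  ring

/-- Lemma 4.1: the mutual information `∫ D_KL(p(x,·) ‖ p̄) dμ(x)` is bounded by
`(1/ln 2) ∫ D_{χ²}(p(x,·) ‖ q) dμ(x)` for any fixed positive PMF `q`. -/
theorem stmt_3 {X : Type*} [MeasurableSpace X] (μ : Measure X) [IsProbabilityMeasure μ]
    {Y : Type*} [Fintype Y] [Nonempty Y]
    (p : X → Y → ℝ) (hp0 : ∀ x y, 0 ≤ p x y) (hp1 : ∀ x y, p x y ≤ 1)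
    (hpmeas : ∀ y, Measurable fun x => p x y) (hpsum : ∀ x, ∑ y, p x y = 1)
    (q : Y → ℝ) (hq0 : ∀ y, 0 < q y) (hqsum : ∑ y, q y = 1)
    (hbar : ∀ y, 0 < ∫ x, p x y ∂μ) :
    ∫ x, klDiv (p x) (fun y => ∫ x', p x' y ∂μ) ∂μ ≤
      (1 / Real.log 2) * ∫ x, chiSqDiv (p x) q ∂μ := by
  set pbar : Y → ℝ := fun y => ∫ x', p x' y ∂μ with hpbar_def
  have h2 : (0:ℝ) < Real.log 2 := Real.log_pos one_lt_two
  have hint_p : ∀ y, Integrable (fun x => p x y) μ := fun y =>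
    aux_integrable_of_bounded μ (hpmeas y) 1 fun x =>
      abs_le.mpr ⟨by linarith [hp0 x y], hp1 x y⟩
  have hpbar_pos : ∀ y, 0 < pbar y := hbar
  have hpbar_sum : ∑ y, pbar y = 1 := by
    rw [hpbar_def, ← integral_finset_sum _ fun y _ => hint_p y]
    simp [hpsum]
  -- the integrand families
  set f : (Y → ℝ) → Y → X → ℝ := fun c y x =>
    if 0 < p x y then p x y * Real.logb 2 (p x y / c y) else 0 with hf_def
  have hfmeas : ∀ (c : Y → ℝ) y, Measurable (f c y) := fun c y =>
    (aux_g_measurable (c y)).comp (hpmeas y)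
  have hfint : ∀ (c : Y → ℝ), (∀ y, 0 < c y) → ∀ y, Integrable (f c y) μ := by
    intro c hc y
    exact aux_integrable_of_bounded μ (hfmeas c y) ((1 + |Real.log (c y)|) / Real.log 2)
      fun x => aux_g_bound (hc y) (hp0 x y) (hp1 x y)
  have hkl_eq : ∀ (c : Y → ℝ), (∀ y, 0 < c y) →
      ∫ x, klDiv (p x) c ∂μ = ∑ y, ∫ x, f c y x ∂μ := by
    intro c hc
    have : (fun x => klDiv (p x) c) = fun x => ∑ y, f c y x := rfl
    rw [this, integral_finset_sum _ fun y _ => hfint c hc y]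
  have hklint : ∀ (c : Y → ℝ), (∀ y, 0 < c y) → Integrable (fun x => klDiv (p x) c) μ := by
    intro c hc
    have : (fun x => klDiv (p x) c) = fun x => ∑ y, f c y x := rfl
    rw [this]
    exact integrable_finset_sum _ fun y _ => hfint c hc y
  -- difference per y
  have hdiff : ∀ y, (∫ x, f q y x ∂μ) - (∫ x, f pbar y x ∂μ)
      = pbar y * Real.logb 2 (pbar y / q y) := by
    intro y
    rw [← integral_sub (hfint q hq0 y) (hfint pbar hpbar_pos y)]
    have heq : ∀ x, f q y x - f pbar y x = p x y * Real.logb 2 (pbar y / q y) := by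
      intro x
      simp only [hf_def]
      split
      case isTrue h =>
        rw [← mul_sub, Real.logb_div (ne_of_gt h) (ne_of_gt (hq0 y)),
          Real.logb_div (ne_of_gt h) (ne_of_gt (hpbar_pos y)),
          Real.logb_div (ne_of_gt (hpbar_pos y)) (ne_of_gt (hq0 y))]
        ring
      case isFalse h =>
        have hpy : p x y = 0 := le_antisymm (not_lt.mp h) (hp0 x y)
        rw [hpy]; ring
    calc (∫ x, (f q y x - f pbar y x) ∂μ)
        = ∫ x, p x y * Real.logb 2 (pbar y / q y) ∂μ := by
          apply integral_congr_ae
          exact Filter.Eventually.of_forall heq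
      _ = (∫ x, p x y ∂μ) * Real.logb 2 (pbar y / q y) := integral_mul_const _ _
      _ = pbar y * Real.logb 2 (pbar y / q y) := rfl
  -- step 1 : mutual info ≤ ∫ KL(p x ‖ q)
  have step1 : ∫ x, klDiv (p x) pbar ∂μ ≤ ∫ x, klDiv (p x) q ∂μ := by
    have hnn : 0 ≤ ∑ y, pbar y * Real.logb 2 (pbar y / q y) :=
      aux_gibbs hpbar_pos hq0 hpbar_sum hqsum
    have : (∫ x, klDiv (p x) q ∂μ) - (∫ x, klDiv (p x) pbar ∂μ)
        = ∑ y, pbar y * Real.logb 2 (pbar y / q y) := by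
      rw [hkl_eq q hq0, hkl_eq pbar hpbar_pos, ← Finset.sum_sub_distrib]
      exact Finset.sum_congr rfl fun y _ => hdiff y
    linarith
  -- step 2 : ∫ KL(p x ‖ q) ≤ (1/ln 2) ∫ χ²
  have hchiint : Integrable (fun x => chiSqDiv (p x) q) μ := by
    have : (fun x => chiSqDiv (p x) q) = fun x => ∑ y, q y * (p x y / q y - 1) ^ 2 := rfl
    rw [this]
    refine integrable_finset_sum _ fun y _ => ?_
    refine aux_integrable_of_bounded μ ?_ (q y * (1 / q y + 1) ^ 2) ?_
    · exact (measurable_const.mul ((((hpmeas y).div_const _).sub measurable_const).pow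
        measurable_const))
    · intro x
      have hqy := hq0 y
      have h0 := hp0 x y
      have h1 := hp1 x y
      have hle : p x y / q y ≤ 1 / q y := div_le_div_of_nonneg_right h1 hqy.le |>.trans_eq (by ring)
      have hge : 0 ≤ p x y / q y := by positivity
      rw [abs_of_nonneg (by positivity)]
      have : (p x y / q y - 1) ^ 2 ≤ (1 / q y + 1) ^ 2 := by nlinarith
      nlinarith
  have step2 : ∫ x, klDiv (p x) q ∂μ ≤ (1 / Real.log 2) * ∫ x, chiSqDiv (p x) q ∂μ := by
    rw [← integral_const_mul]
    apply integral_mono (hklint q hq0) (hchiint.const_mul _)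
    intro x
    exact aux_kl_le_chisq (hp0 x) (hpsum x) hq0 hqsum
  exact step1.trans step2
end
end

section
/- Let d ≥ 2 be an integer and let Π₁, Π₂ be orthogonal projection matrices on ℂ^d of ranks r₁ and r₂ respectively, with range(Π₁) ⊆ range(Π₂). Then ∫ (U ⊗ U)(Π₁ ⊗ Π₂)(U† ⊗ U†) dμ(U) = (r₁/(d·(d²−1)))·((r₂·d − 1)·I + (d − r₂)·W), where ⊗ denotes the Kronecker product of matrices, I is the identity matrix on ℂ^d ⊗ ℂ^d, and W is the swap matrix on ℂ^d ⊗ ℂ^d whose ((i,j),(k,l)) entry is 1 if i = l and j = k, and 0 otherwise. -/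
open MeasureTheory Matrix
open scoped ComplexOrder Kronecker

noncomputable section

instance {m n : Type*} : MeasurableSpace (Matrix m n ℂ) :=
  inferInstanceAs (MeasurableSpace (m → n → ℂ))

/-- The swap matrix `W` on `ℂ^d ⊗ ℂ^d`. -/
noncomputable def swapMatrix (d : ℕ) : Matrix (Fin d × Fin d) (Fin d × Fin d) ℂ :=
  Matrix.of fun p q => if p.1 = q.2 ∧ p.2 = q.1 then 1 else 0

/-!
The twirl `T = ∫ (U ⊗ U) A (U ⊗ U)† dμ` commutes with every `V ⊗ V`, `V` unitary, by left
invariance of `μ`. Commuting with the tensor squares of diagonal phase matrices, of permutation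
matrices and of one Householder reflection forces a matrix to be of the form `a • 1 + b • W`.
As `1` and `W` themselves commute with every `U ⊗ U`, `tr T = tr A` and `tr (W T) = tr (W A)`,
two linear equations that determine `a` and `b` once `d ≥ 2`. For `A = Π₁ ⊗ Π₂` these traces
are `r₁ r₂` and `tr (Π₁ Π₂) = tr (Π₂ Π₁) = tr Π₁ = r₁`: the range inclusion gives `Π₂ Π₁ = Π₁`,
and the trace of an idempotent matrix is its rank.
-/

instance {m n : Type*} [Fintype m] [Fintype n] : BorelSpace (Matrix m n ℂ) :=
  inferInstanceAs (BorelSpace (m → n → ℂ))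

theorem Complex.I_pow_ne_I_pow {m n : ℕ} (hm : m < 4) (hn : n < 4) (h : m ≠ n) :
    Complex.I ^ m ≠ Complex.I ^ n := by
  interval_cases m <;> interval_cases n <;> simp_all [pow_succ, Complex.ext_iff] <;> norm_num

theorem Equiv.Perm.exists_apply_eq_pair {ι : Type*} [Finite ι] {i j k l : ι} (hij : i ≠ j)
    (hkl : k ≠ l) : ∃ σ : Equiv.Perm ι, σ i = k ∧ σ j = l := by
  obtain ⟨σ, hσ⟩ := Equiv.Perm.exists_extending_pair ![i, j] ![k, l]
    (injective_pair_iff_ne.2 hij) (injective_pair_iff_ne.2 hkl)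
  exact ⟨σ, hσ 0, hσ 1⟩

theorem Prod.eq_or_eq_swap_of_pair_eq {ι : Type*} {p q : ι × ι}
    (h : ({p.1, p.2} : Multiset ι) = {q.1, q.2}) : q = p ∨ q = p.swap := by
  obtain ⟨a, b⟩ := p
  obtain ⟨c, e⟩ := q
  simp only [Multiset.insert_eq_cons, Multiset.cons_eq_cons] at h
  aesop

theorem Continuous.integrable_of_compactSpace {X E : Type*} [TopologicalSpace X] [MeasurableSpace X]
    [OpensMeasurableSpace X] [CompactSpace X] [NormedAddCommGroup E] {μ : Measure X}
    [IsFiniteMeasure μ] {f : X → E} (hf : Continuous f) : Integrable f μ :=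
  hf.integrable_of_hasCompactSupport (.of_compactSpace f)

@[fun_prop]
theorem Continuous.matrix_kronecker {X l m n o R : Type*} [TopologicalSpace X] [TopologicalSpace R]
    [Mul R] [ContinuousMul R] {A : X → Matrix l m R} {B : X → Matrix n o R}
    (hA : Continuous A) (hB : Continuous B) : Continuous fun x => A x ⊗ₖ B x :=
  continuous_matrix fun _ _ => (hA.matrix_elem _ _).mul (hB.matrix_elem _ _)

namespace Matrix

section TensorSwap

def tensorSwap (ι R : Type*) [DecidableEq ι] [Zero R] [One R] : Matrix (ι × ι) (ι × ι) R :=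
  of fun p q => if p.1 = q.2 ∧ p.2 = q.1 then 1 else 0

theorem swapMatrix_eq_tensorSwap (d : ℕ) : swapMatrix d = tensorSwap (Fin d) ℂ := rfl

variable {ι R : Type*} [DecidableEq ι]

theorem tensorSwap_apply [Zero R] [One R] (p q : ι × ι) :
    tensorSwap ι R p q = if q = p.swap then 1 else 0 := by
  simp only [tensorSwap, of_apply, Prod.ext_iff, Prod.fst_swap, Prod.snd_swap]
  exact if_congr ⟨fun h => ⟨h.2.symm, h.1.symm⟩, fun h => ⟨h.2.symm, h.1.symm⟩⟩ rfl rfl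

variable [Fintype ι] [CommSemiring R]

theorem tensorSwap_mul_apply (B : Matrix (ι × ι) (ι × ι) R) (p q : ι × ι) :
    (tensorSwap ι R * B) p q = B p.swap q := by
  simp [tensorSwap, mul_apply, Fintype.sum_prod_type, ite_and]
  rfl

theorem mul_tensorSwap_apply (B : Matrix (ι × ι) (ι × ι) R) (p q : ι × ι) :
    (B * tensorSwap ι R) p q = B p q.swap := by
  simp [tensorSwap, mul_apply, Fintype.sum_prod_type, ite_and, eq_comm]
  rfl

theorem tensorSwap_mul_kronecker (B C : Matrix ι ι R) :
    tensorSwap ι R * (B ⊗ₖ C) = (C ⊗ₖ B) * tensorSwap ι R := by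
  ext p q
  simp [tensorSwap_mul_apply, mul_tensorSwap_apply, mul_comm]

theorem tensorSwap_mul_self : tensorSwap ι R * tensorSwap ι R = 1 := by
  ext p q
  rw [tensorSwap_mul_apply]
  simp [tensorSwap, one_apply, Prod.ext_iff, and_comm]

theorem trace_tensorSwap : (tensorSwap ι R).trace = Fintype.card ι := by
  simp [tensorSwap, trace, Fintype.sum_prod_type, ite_and]

theorem trace_tensorSwap_mul_kronecker (B C : Matrix ι ι R) :
    (tensorSwap ι R * (B ⊗ₖ C)).trace = (B * C).trace := by
  simp only [trace, diag_apply, tensorSwap_mul_apply]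
  simp [Fintype.sum_prod_type, mul_apply]
  rw [Finset.sum_comm]

end TensorSwap

instance {ι 𝕜 : Type*} [Fintype ι] [DecidableEq ι] [RCLike 𝕜] :
    CompactSpace (unitaryGroup ι 𝕜) := by
  have hbox : IsCompact (Set.univ.pi fun _ => Set.univ.pi fun _ => Metric.closedBall 0 1 :
      Set (Matrix ι ι 𝕜)) :=
    isCompact_univ_pi fun _ => isCompact_univ_pi fun _ => isCompact_closedBall (0 : 𝕜) 1
  refine isCompact_iff_compactSpace.mp <|
    hbox.of_isClosed_subset (isClosed_unitary (R := Matrix ι ι 𝕜)) fun U hU => ?_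
  simpa [Set.mem_pi] using entry_norm_bound_of_unitary hU

section Unitary

variable {ι : Type*} [Fintype ι] [DecidableEq ι]

theorem diagonal_mem_unitaryGroup {c : ι → ℂ} (hc : ∀ k, star (c k) * c k = 1) :
    diagonal c ∈ unitaryGroup ι ℂ := by
  rw [mem_unitaryGroup_iff', star_eq_conjTranspose, diagonal_conjTranspose,
    diagonal_mul_diagonal]
  exact congrArg diagonal (funext hc)

theorem permMatrix_mem_unitaryGroup (σ : Equiv.Perm ι) :
    σ.permMatrix ℂ ∈ unitaryGroup ι ℂ := by
  rw [mem_unitaryGroup_iff', star_eq_conjTranspose, conjTranspose_permMatrix, ← permMatrix_mul,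
    mul_inv_cancel, permMatrix_one]

theorem householder_mem_unitaryGroup {u : ι → ℂ} (hu : star u ⬝ᵥ u = 1) :
    1 - (2 : ℂ) • vecMulVec u (star u) ∈ unitaryGroup ι ℂ := by
  have hP : vecMulVec u (star u) * vecMulVec u (star u) = vecMulVec u (star u) := by
    rw [vecMulVec_mul_vecMulVec, hu, one_smul]
  rw [mem_unitaryGroup_iff']
  simp only [star_sub, star_one, star_smul, star_eq_conjTranspose, conjTranspose_vecMulVec,
    star_star, sub_mul, mul_sub, one_mul, mul_one, smul_mul_assoc, mul_smul_comm, hP]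
  norm_num
  module

end Unitary

section Commutant

variable {ι : Type*} [Fintype ι] [DecidableEq ι] {M : Matrix (ι × ι) (ι × ι) ℂ}

theorem apply_eq_zero_of_count_ne (hM : ∀ U ∈ unitaryGroup ι ℂ, (U ⊗ₖ U) * M = M * (U ⊗ₖ U))
    {p q : ι × ι} (t : ι)
    (h : ({p.1, p.2} : Multiset ι).count t ≠ ({q.1, q.2} : Multiset ι).count t) :
    M p q = 0 := by
  set c : ι → ℂ := fun k => if k = t then Complex.I else 1
  have hc : ∀ r : ι × ι, c r.1 * c r.2 = Complex.I ^ ({r.1, r.2} : Multiset ι).count t := by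
    intro r
    simp only [c, Multiset.insert_eq_cons, Multiset.count_cons, Multiset.count_singleton]
    by_cases h1 : r.1 = t <;> by_cases h2 : r.2 = t <;> simp [h1, h2, eq_comm (a := t), sq]
  have hU : diagonal c ∈ unitaryGroup ι ℂ :=
    diagonal_mem_unitaryGroup fun k => by by_cases hk : k = t <;> simp [c, hk]
  have hpq := congrFun (congrFun (hM _ hU) p) q
  rw [diagonal_kronecker_diagonal, diagonal_mul, mul_diagonal, hc, hc] at hpq
  have hcard : ∀ r : ι × ι, ({r.1, r.2} : Multiset ι).count t ≤ 2 := fun r =>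
    (Multiset.count_le_card _ _).trans (by simp)
  have hI := sub_ne_zero.2 <|
    Complex.I_pow_ne_I_pow ((hcard p).trans_lt (by norm_num)) ((hcard q).trans_lt (by norm_num)) h
  exact (mul_eq_zero.1 (by linear_combination hpq : _ * M p q = 0)).resolve_left hI

theorem apply_eq_zero_of_ne_of_ne_swap
    (hM : ∀ U ∈ unitaryGroup ι ℂ, (U ⊗ₖ U) * M = M * (U ⊗ₖ U)) {p q : ι × ι}
    (hne : q ≠ p) (hns : q ≠ p.swap) : M p q = 0 := by
  by_contra h0
  have hpair : ({p.1, p.2} : Multiset ι) = {q.1, q.2} :=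
    Multiset.ext.2 fun t => by_contra fun ht => h0 (apply_eq_zero_of_count_ne hM t ht)
  exact (Prod.eq_or_eq_swap_of_pair_eq hpair).elim hne hns

theorem apply_perm_eq (hM : ∀ U ∈ unitaryGroup ι ℂ, (U ⊗ₖ U) * M = M * (U ⊗ₖ U))
    (σ : Equiv.Perm ι) (p q : ι × ι) : M (σ p.1, σ p.2) (σ q.1, σ q.2) = M p q := by
  have hkron : σ.permMatrix ℂ ⊗ₖ σ.permMatrix ℂ = Equiv.Perm.permMatrix ℂ (σ.prodCongr σ) := by
    ext r s
    simp [PEquiv.toMatrix_apply, Prod.ext_iff, ← ite_and, and_comm]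
  have h := hM _ (permMatrix_mem_unitaryGroup σ)
  rw [hkron, PEquiv.toMatrix_toPEquiv_mul, PEquiv.mul_toMatrix_toPEquiv] at h
  obtain ⟨p₁, p₂⟩ := p
  obtain ⟨q₁, q₂⟩ := q
  simpa using congrFun (congrFun h (p₁, p₂)) (σ q₁, σ q₂)

theorem apply_diag_eq_add (hM : ∀ U ∈ unitaryGroup ι ℂ, (U ⊗ₖ U) * M = M * (U ⊗ₖ U))
    {i j : ι} (hij : i ≠ j) : M (i, i) (i, i) = M (i, j) (i, j) + M (i, j) (j, i) := by
  -- Any unitary with `V i i * V i j ≠ 0` would do; reflecting along the rational unit vector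
  -- `(3/5) eᵢ + (4/5) eⱼ` avoids square roots.
  set u : ι → ℂ := Pi.single i (3 / 5) + Pi.single j (4 / 5)
  have hu : star u ⬝ᵥ u = 1 := by
    rw [dotProduct, Fintype.sum_eq_add i j hij fun k hk => by simp [u, hk.1, hk.2]]
    simp [u, hij, hij.symm]
    norm_num
  set V := 1 - (2 : ℂ) • vecMulVec u (star u)
  have hVii : V i i = 7 / 25 := by simp [V, u, hij, vecMulVec_apply]; norm_num
  have hVij : V i j = -24 / 25 := by simp [V, u, hij, vecMulVec_apply]; norm_num
  have hswap : M (j, i) (i, j) = M (i, j) (j, i) := by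
    simpa using apply_perm_eq hM (Equiv.swap i j) (i, j) (j, i)
  have hleft : ((V ⊗ₖ V) * M) (i, i) (i, j) =
      V i i * V i j * (M (i, j) (i, j) + M (i, j) (j, i)) := by
    rw [mul_apply, Fintype.sum_eq_add (i, j) (j, i) (by simp [hij]) fun r hr => by
      rw [apply_eq_zero_of_ne_of_ne_swap hM hr.1.symm
        fun h => hr.2 (Prod.swap_eq_iff_eq_swap.1 h.symm), mul_zero]]
    simp only [kroneckerMap_apply, hswap]
    ring
  have hright : (M * (V ⊗ₖ V)) (i, i) (i, j) = M (i, i) (i, i) * (V i i * V i j) := by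
    rw [mul_apply, Fintype.sum_eq_single (i, i) fun r hr => by
      rw [apply_eq_zero_of_ne_of_ne_swap hM hr hr, zero_mul]]
    rfl
  have h := congrFun (congrFun (hM V (householder_mem_unitaryGroup hu)) (i, i)) (i, j)
  rw [hleft, hright, hVii, hVij] at h
  linear_combination (625 / 168 : ℂ) * h

theorem exists_eq_smul_one_add_smul_tensorSwap [Nontrivial ι]
    (hM : ∀ U ∈ unitaryGroup ι ℂ, (U ⊗ₖ U) * M = M * (U ⊗ₖ U)) :
    ∃ a b : ℂ, M = a • 1 + b • tensorSwap ι ℂ := by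
  obtain ⟨i, j, hij⟩ := exists_pair_ne ι
  refine ⟨M (i, j) (i, j), M (i, j) (j, i), ?_⟩
  have hoff : ∀ {k l : ι}, k ≠ l →
      M (k, l) (k, l) = M (i, j) (i, j) ∧ M (k, l) (l, k) = M (i, j) (j, i) := by
    intro k l hkl
    obtain ⟨σ, rfl, rfl⟩ := Equiv.Perm.exists_apply_eq_pair hij hkl
    exact ⟨apply_perm_eq hM σ (i, j) (i, j), apply_perm_eq hM σ (i, j) (j, i)⟩
  ext ⟨k, l⟩ q
  by_cases hq : q = (k, l)
  · subst hq
    by_cases hkl : k = l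
    · subst hkl
      have hdiag : M (k, k) (k, k) = M (i, i) (i, i) := by
        simpa using apply_perm_eq hM (Equiv.swap i k) (i, i) (i, i)
      simp [hdiag, apply_diag_eq_add hM hij, tensorSwap_apply]
    · simp [(hoff hkl).1, tensorSwap_apply, hkl]
  by_cases hs : q = (l, k)
  · subst hs
    have hkl : k ≠ l := fun h => hq (by rw [h])
    simp [(hoff hkl).2, tensorSwap_apply, hkl]
  · rw [apply_eq_zero_of_ne_of_ne_swap hM hq hs]
    simp [tensorSwap_apply, Ne.symm hq, hs]

end Commutant

theorem mul_of_integral_mul {α 𝕜 l m n o : Type*} [MeasurableSpace α] {μ : Measure α} [RCLike 𝕜]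
    [Fintype m] [Fintype n] (X : Matrix l m 𝕜) (f : α → Matrix m n 𝕜) (Y : Matrix n o 𝕜)
    (hf : ∀ i j, Integrable (fun a => f a i j) μ) :
    X * (of fun i j => ∫ a, f a i j ∂μ) * Y = of fun i j => ∫ a, (X * f a * Y) i j ∂μ := by
  ext i j
  simp only [mul_apply, of_apply, Finset.sum_mul]
  rw [integral_finsetSum _ fun k _ => integrable_finsetSum _ fun r _ =>
    ((hf r k).const_mul _).mul_const _]
  refine Finset.sum_congr rfl fun k _ => ?_
  rw [integral_finsetSum _ fun r _ => ((hf r k).const_mul _).mul_const _]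
  exact Finset.sum_congr rfl fun r _ => by rw [integral_mul_const, integral_const_mul]

section Twirl

variable {ι : Type*} [Fintype ι]

def tensorConj (U : Matrix ι ι ℂ) (A : Matrix (ι × ι) (ι × ι) ℂ) : Matrix (ι × ι) (ι × ι) ℂ :=
  (U ⊗ₖ U) * A * (star U ⊗ₖ star U)

theorem tensorConj_mul (U V : Matrix ι ι ℂ) (A : Matrix (ι × ι) (ι × ι) ℂ) :
    tensorConj (V * U) A = tensorConj V (tensorConj U A) := by
  simp only [tensorConj, star_mul, mul_kronecker_mul, mul_assoc]

@[fun_prop]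
theorem Continuous.matrix_tensorConj {X : Type*} [TopologicalSpace X] {U : X → Matrix ι ι ℂ}
    (hU : Continuous U) (A : Matrix (ι × ι) (ι × ι) ℂ) :
    Continuous fun x => tensorConj (U x) A := by
  unfold tensorConj
  fun_prop

variable [DecidableEq ι]

theorem star_kronecker_mul_kronecker {U : Matrix ι ι ℂ} (hU : U ∈ unitaryGroup ι ℂ) :
    (star U ⊗ₖ star U) * (U ⊗ₖ U) = 1 := by
  rw [← mul_kronecker_mul, mem_unitaryGroup_iff'.1 hU, one_kronecker_one]

theorem trace_mul_tensorConj {U : Matrix ι ι ℂ} (hU : U ∈ unitaryGroup ι ℂ)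
    {B : Matrix (ι × ι) (ι × ι) ℂ} (hB : (U ⊗ₖ U) * B = B * (U ⊗ₖ U))
    (A : Matrix (ι × ι) (ι × ι) ℂ) : (B * tensorConj U A).trace = (B * A).trace := by
  have h : B * tensorConj U A = tensorConj U (B * A) := by
    rw [tensorConj, tensorConj, ← mul_assoc, ← mul_assoc, ← hB, mul_assoc _ B]
  rw [h, tensorConj, trace_mul_cycle, star_kronecker_mul_kronecker hU, one_mul]

variable (μ : Measure (unitaryGroup ι ℂ))

def twirl (A : Matrix (ι × ι) (ι × ι) ℂ) : Matrix (ι × ι) (ι × ι) ℂ :=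
  of fun p q => ∫ U, tensorConj (U : Matrix ι ι ℂ) A p q ∂μ

variable {μ}

theorem tensorConj_twirl [IsFiniteMeasure μ] [μ.IsMulLeftInvariant]
    (A : Matrix (ι × ι) (ι × ι) ℂ) (V : unitaryGroup ι ℂ) :
    tensorConj (V : Matrix ι ι ℂ) (twirl μ A) = twirl μ A := by
  rw [tensorConj, twirl, mul_of_integral_mul _ _ _ fun p q =>
    Continuous.integrable_of_compactSpace (by fun_prop)]
  ext p q
  calc _ = ∫ U : unitaryGroup ι ℂ,
        tensorConj ((V * U : unitaryGroup ι ℂ) : Matrix ι ι ℂ) A p q ∂μ := by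
        simp only [of_apply, Submonoid.coe_mul, tensorConj_mul]
        rfl
    _ = _ := integral_mul_left_eq_self
        (fun U : unitaryGroup ι ℂ => tensorConj (U : Matrix ι ι ℂ) A p q) V

theorem kronecker_mul_twirl_comm [IsFiniteMeasure μ] [μ.IsMulLeftInvariant]
    (A : Matrix (ι × ι) (ι × ι) ℂ) {V : Matrix ι ι ℂ} (hV : V ∈ unitaryGroup ι ℂ) :
    (V ⊗ₖ V) * twirl μ A = twirl μ A * (V ⊗ₖ V) := by
  conv_rhs => rw [← tensorConj_twirl A ⟨V, hV⟩, tensorConj, mul_assoc _ (star V ⊗ₖ star V),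
    star_kronecker_mul_kronecker hV, mul_one]

theorem trace_mul_twirl [IsProbabilityMeasure μ] {B : Matrix (ι × ι) (ι × ι) ℂ}
    (hB : ∀ U ∈ unitaryGroup ι ℂ, (U ⊗ₖ U) * B = B * (U ⊗ₖ U)) (A : Matrix (ι × ι) (ι × ι) ℂ) :
    (B * twirl μ A).trace = (B * A).trace := by
  have h := mul_of_integral_mul (μ := μ) B
    (fun U : unitaryGroup ι ℂ => tensorConj (U : Matrix ι ι ℂ) A) (1 : Matrix (ι × ι) (ι × ι) ℂ)
    fun p q => Continuous.integrable_of_compactSpace (by fun_prop)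
  have hU : ∀ U : unitaryGroup ι ℂ, ∑ p, (B * tensorConj (U : Matrix ι ι ℂ) A) p p =
      (B * A).trace := fun U => trace_mul_tensorConj U.2 (hB _ U.2) A
  simp only [mul_one] at h
  rw [twirl, h, trace]
  simp only [diag_apply, of_apply]
  rw [← integral_finsetSum _ fun p _ =>
    Continuous.integrable_of_compactSpace (μ := μ) (by fun_prop)]
  simp [hU]

theorem twirl_eq_smul_one_add_smul_tensorSwap [Nontrivial ι] [IsProbabilityMeasure μ]
    [μ.IsMulLeftInvariant] (A : Matrix (ι × ι) (ι × ι) ℂ) :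
    twirl μ A = ((Fintype.card ι * A.trace - (tensorSwap ι ℂ * A).trace) /
        (Fintype.card ι * ((Fintype.card ι : ℂ) ^ 2 - 1))) • 1 +
      ((Fintype.card ι * (tensorSwap ι ℂ * A).trace - A.trace) /
        (Fintype.card ι * ((Fintype.card ι : ℂ) ^ 2 - 1))) • tensorSwap ι ℂ := by
  obtain ⟨a, b, hab⟩ :=
    exists_eq_smul_one_add_smul_tensorSwap fun U hU => kronecker_mul_twirl_comm (μ := μ) A hU
  have htr : A.trace = a * (Fintype.card ι : ℂ) ^ 2 + b * Fintype.card ι := by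
    have := trace_mul_twirl (μ := μ) (B := 1) (by simp) A
    rw [one_mul, one_mul, hab] at this
    simp [trace_tensorSwap, Fintype.card_prod] at this
    linear_combination -this
  have hswap : (tensorSwap ι ℂ * A).trace = a * Fintype.card ι + b * (Fintype.card ι : ℂ) ^ 2 := by
    have := trace_mul_twirl (μ := μ) (fun U _ => (tensorSwap_mul_kronecker U U).symm) A
    rw [hab, mul_add, mul_smul_comm, mul_smul_comm, mul_one, tensorSwap_mul_self] at this
    simp [trace_tensorSwap] at this
    linear_combination -this
  set n : ℂ := (Fintype.card ι : ℂ)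
  have hn : n * (n ^ 2 - 1) ≠ 0 := by
    have h2 : 1 < Fintype.card ι := Fintype.one_lt_card
    exact mul_ne_zero (by simp [n])
      (sub_ne_zero.2 (by simp only [n]; exact_mod_cast (Nat.one_lt_pow two_ne_zero h2).ne'))
  rw [hab]
  congr 2
  · rw [eq_div_iff hn]; linear_combination -n * htr + hswap
  · rw [eq_div_iff hn]; linear_combination htr - n * hswap

end Twirl

section Projection

variable {n K : Type*} [Fintype n] [DecidableEq n] [Field K]

theorem isProj_range_toLin'_of_mul_self_eq {P : Matrix n n K} (hP : P * P = P) :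
    LinearMap.IsProj (LinearMap.range (toLin' P)) (toLin' P) :=
  LinearMap.IsIdempotentElem.isProj_range _ <| by
    rw [IsIdempotentElem, Module.End.mul_eq_comp, ← toLin'_mul, hP]

theorem trace_eq_rank_of_mul_self_eq {P : Matrix n n K} (hP : P * P = P) :
    P.trace = P.rank := by
  rw [← trace_toLin'_eq, (isProj_range_toLin'_of_mul_self_eq hP).trace]
  rfl

theorem mul_eq_right_of_range_le {P Q : Matrix n n K} (hP : P * P = P)
    (h : LinearMap.range (toLin' Q) ≤ LinearMap.range (toLin' P)) : P * Q = Q := by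
  refine toLin'.injective (LinearMap.ext fun v => ?_)
  rw [toLin'_mul, LinearMap.comp_apply]
  exact (isProj_range_toLin'_of_mul_self_eq hP).map_id _ (h (LinearMap.mem_range_self _ v))

end Projection

end Matrix

theorem stmt_19_general (d : ℕ) (hd : 2 ≤ d)
    (μ : Measure (Matrix.unitaryGroup (Fin d) ℂ)) [μ.IsHaarMeasure] [IsProbabilityMeasure μ]
    (P₁ P₂ : Matrix (Fin d) (Fin d) ℂ) (r₁ r₂ : ℕ)
    (hP₁proj : P₁ * P₁ = P₁) (hr₁ : P₁.rank = r₁)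
    (hP₂proj : P₂ * P₂ = P₂) (hr₂ : P₂.rank = r₂)
    (hrange : LinearMap.range (Matrix.toLin' P₁) ≤ LinearMap.range (Matrix.toLin' P₂)) :
    ∀ p q : Fin d × Fin d,
      (∫ U : Matrix.unitaryGroup (Fin d) ℂ,
          ((((U : Matrix (Fin d) (Fin d) ℂ) ⊗ₖ (U : Matrix (Fin d) (Fin d) ℂ)) *
            (P₁ ⊗ₖ P₂) *
            (star (U : Matrix (Fin d) (Fin d) ℂ) ⊗ₖ star (U : Matrix (Fin d) (Fin d) ℂ))) p q)
          ∂μ) =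
        (((r₁ : ℂ) / ((d : ℂ) * ((d : ℂ) ^ 2 - 1))) •
          (((r₂ : ℂ) * d - 1) • (1 : Matrix (Fin d × Fin d) (Fin d × Fin d) ℂ) +
            ((d : ℂ) - r₂) • swapMatrix d)) p q := by
  intro p q
  have : Nontrivial (Fin d) := Fin.nontrivial_iff_two_le.2 hd
  have htr₁ := trace_eq_rank_of_mul_self_eq hP₁proj
  have htr₂ := trace_eq_rank_of_mul_self_eq hP₂proj
  change twirl μ (P₁ ⊗ₖ P₂) p q = _
  rw [twirl_eq_smul_one_add_smul_tensorSwap, trace_kronecker, trace_tensorSwap_mul_kronecker,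
    trace_mul_comm, mul_eq_right_of_range_le hP₂proj hrange, htr₁, htr₂, hr₁, hr₂,
    Fintype.card_fin, swapMatrix_eq_tensorSwap, smul_add, smul_smul, smul_smul]
  simp only [Matrix.add_apply, Matrix.smul_apply, smul_eq_mul]
  ring

/-- Proposition A.2: the two-fold twirl of `Π₁ ⊗ Π₂` for nested projections, entrywise. -/
theorem stmt_19 (d : ℕ) (hd : 2 ≤ d)
    (μ : Measure (Matrix.unitaryGroup (Fin d) ℂ)) [μ.IsHaarMeasure] [IsProbabilityMeasure μ]
    (P₁ P₂ : Matrix (Fin d) (Fin d) ℂ) (r₁ r₂ : ℕ)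
    (hP₁herm : P₁.IsHermitian) (hP₁proj : P₁ * P₁ = P₁) (hr₁ : P₁.rank = r₁)
    (hP₂herm : P₂.IsHermitian) (hP₂proj : P₂ * P₂ = P₂) (hr₂ : P₂.rank = r₂)
    (hrange : LinearMap.range (Matrix.toLin' P₁) ≤ LinearMap.range (Matrix.toLin' P₂)) :
    ∀ p q : Fin d × Fin d,
      (∫ U : Matrix.unitaryGroup (Fin d) ℂ,
          ((((U : Matrix (Fin d) (Fin d) ℂ) ⊗ₖ (U : Matrix (Fin d) (Fin d) ℂ)) *
            (P₁ ⊗ₖ P₂) *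
            (star (U : Matrix (Fin d) (Fin d) ℂ) ⊗ₖ star (U : Matrix (Fin d) (Fin d) ℂ))) p q)
          ∂μ) =
        (((r₁ : ℂ) / ((d : ℂ) * ((d : ℂ) ^ 2 - 1))) •
          (((r₂ : ℂ) * d - 1) • (1 : Matrix (Fin d × Fin d) (Fin d × Fin d) ℂ) +
            ((d : ℂ) - r₂) • swapMatrix d)) p q :=
  stmt_19_general d hd μ P₁ P₂ r₁ r₂ hP₁proj hr₁ hP₂proj hr₂ hrange
end
end
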